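/- Let q be a prime, ℓ, n ≥ 1, and let C be uniformly distributed over ℓ×n matrices with entries in ℤ/q. Let u ∈ (ℤ/q)^ℓ be fixed, and let N = |{s ∈ {0,1}^n \ {0} : Cs = u}|. Then Pr[N ≤ (2^n − 1)/(2q^ℓ)] ≤ 4q^ℓ/(2^n − 1). -/

import Mathlib

/-!
Two distinct nonzero binary vectors are linearly independent over the field `ℤ/q`, so for a
uniform matrix `C` the events `Cs = u` each have probability `q^(-ℓ)` and are pairwise
independent: `(Cs, Ct)` is uniform on `(ℤ/q)^ℓ × (ℤ/q)^ℓ`. Hence `N` has mean `μ = (2^n - 1)/q^ℓ`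
and variance at most `μ`, and Chebyshev's inequality gives `Pr[N ≤ μ/2] ≤ μ / (μ/2)^2 = 4/μ`.
-/

open Finset

theorem AddMonoidHom.card_fiber_mul_card_of_surjective {G H : Type*} [AddGroup G] [Fintype G]
    [AddGroup H] [Fintype H] [DecidableEq H] (f : G →+ H) (hf : Function.Surjective f) (y : H) :
    #{x | f x = y} * Fintype.card H = Fintype.card G := by
  calc #{x | f x = y} * Fintype.card H = ∑ z : H, #{x | f x = z} := by
        rw [sum_congr rfl fun z _ ↦ AddMonoidHom.card_fiber_eq_of_mem_range f (hf z) (hf y),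
          sum_const, card_univ, smul_eq_mul, mul_comm]
    _ = Fintype.card G := (card_eq_sum_card_fiberwise fun _ _ ↦ mem_univ _).symm

theorem LinearIndependent.exists_linearMap_apply_eq {ι K V W : Type*} [Field K] [AddCommGroup V]
    [Module K V] [AddCommGroup W] [Module K W] {v : ι → V} (hv : LinearIndependent K v)
    (w : ι → W) : ∃ f : V →ₗ[K] W, ∀ i, f (v i) = w i := by
  obtain ⟨f, hf⟩ := LinearMap.exists_extend ((Module.Basis.span hv).constr K w)
  refine ⟨f, fun i ↦ ?_⟩
  have h := LinearMap.congr_fun hf (Module.Basis.span hv i)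
  rw [Module.Basis.constr_basis] at h
  simpa using h

namespace Matrix

variable {ι K m n : Type*} [Field K] [Fintype n] [DecidableEq n]

theorem surjective_mulVec_of_linearIndependent {v : ι → n → K} (hv : LinearIndependent K v) :
    Function.Surjective fun (C : Matrix m n K) i ↦ C *ᵥ v i := by
  intro w
  obtain ⟨f, hf⟩ := hv.exists_linearMap_apply_eq w
  exact ⟨LinearMap.toMatrix' f, funext fun i ↦ (LinearMap.toMatrix'_mulVec f _).trans (hf i)⟩

variable [Fintype K] [DecidableEq K] [Fintype m] [DecidableEq m]

theorem card_filter_forall_mulVec_eq_mul_card [Fintype ι] [DecidableEq ι] {v : ι → n → K}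
    (hv : LinearIndependent K v) (w : ι → m → K) :
    #{C : Matrix m n K | ∀ i, C *ᵥ v i = w i} * Fintype.card (ι → m → K) =
      Fintype.card (Matrix m n K) := by
  let φ : Matrix m n K →+ (ι → m → K) :=
    AddMonoidHom.mk' (fun C i ↦ C *ᵥ v i) fun A B ↦ funext fun i ↦ add_mulVec A B (v i)
  rw [← φ.card_fiber_mul_card_of_surjective (surjective_mulVec_of_linearIndependent hv) w]
  simp [φ, funext_iff]

theorem card_filter_mulVec_eq {s : n → K} (hs : s ≠ 0) (u : m → K) :
    (#{C : Matrix m n K | C *ᵥ s = u} : ℝ) =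
      (Fintype.card (m → K) : ℝ)⁻¹ * Fintype.card (Matrix m n K) := by
  have h := card_filter_forall_mulVec_eq_mul_card (ι := Unit) (v := fun _ ↦ s)
    (linearIndependent_unique_iff.mpr hs) fun _ ↦ u
  rw [Fintype.card_congr (Equiv.funUnique Unit (m → K))] at h
  simp only [forall_const] at h
  have hc : (Fintype.card (m → K) : ℝ) ≠ 0 := Nat.cast_ne_zero.mpr Fintype.card_ne_zero
  rw [← h]
  push_cast
  field_simp

theorem card_filter_mulVec_eq_and_mulVec_eq {s t : n → K} (hst : LinearIndependent K ![s, t])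
    (u u' : m → K) :
    (#{C : Matrix m n K | C *ᵥ s = u ∧ C *ᵥ t = u'} : ℝ) =
      (Fintype.card (m → K) : ℝ)⁻¹ ^ 2 * Fintype.card (Matrix m n K) := by
  have h := card_filter_forall_mulVec_eq_mul_card hst ![u, u']
  rw [Fintype.card_fun, Fintype.card_fin] at h
  simp only [Fin.forall_fin_two, cons_val_zero, cons_val_one] at h
  have hc : (Fintype.card (m → K) : ℝ) ≠ 0 := Nat.cast_ne_zero.mpr Fintype.card_ne_zero
  rw [← h]
  push_cast
  field_simp

end Matrix

namespace Finset

variable {Ω ι : Type*} [Fintype Ω]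

theorem card_filter_le_sub_mul_sq_le (f : Ω → ℝ) (c : ℝ) {a : ℝ} (ha : 0 ≤ a) :
    #{ω | f ω ≤ c - a} * a ^ 2 ≤ ∑ ω, (f ω - c) ^ 2 := by
  calc #{ω | f ω ≤ c - a} * a ^ 2 ≤ ∑ ω ∈ {ω | f ω ≤ c - a}, (f ω - c) ^ 2 := by
        rw [← nsmul_eq_mul]
        refine card_nsmul_le_sum _ _ _ fun ω hω ↦ ?_
        have : a ≤ c - f ω := by linarith [(mem_filter.mp hω).2]
        nlinarith
    _ ≤ ∑ ω, (f ω - c) ^ 2 :=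
        sum_le_sum_of_subset_of_nonneg (subset_univ _) fun _ _ _ ↦ sq_nonneg _

variable [DecidableEq Ω] (S : Finset ι) (A : ι → Finset Ω)

theorem sum_card_filter_mem : ∑ ω, #{s ∈ S | ω ∈ A s} = ∑ s ∈ S, #(A s) := by
  simp_rw [card_filter]
  rw [sum_comm]
  simp

theorem sum_card_filter_mem_sq :
    ∑ ω, #{s ∈ S | ω ∈ A s} ^ 2 = ∑ s ∈ S, ∑ t ∈ S, #(A s ∩ A t) := by
  simp_rw [card_filter, sq, sum_mul_sum, ite_zero_mul_ite_zero, mul_one, ← mem_inter]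
  rw [sum_comm]
  refine sum_congr rfl fun s _ ↦ ?_
  rw [sum_comm]
  simp only [sum_boole, filter_mem_eq_inter, univ_inter, Nat.cast_id]

theorem sum_sq_card_filter_mem_sub [DecidableEq ι] {p : ℝ}
    (hA : ∀ s ∈ S, (#(A s) : ℝ) = p * Fintype.card Ω)
    (hAA : ∀ s ∈ S, ∀ t ∈ S, s ≠ t → (#(A s ∩ A t) : ℝ) = p ^ 2 * Fintype.card Ω) :
    ∑ ω, ((#{s ∈ S | ω ∈ A s} : ℝ) - #S * p) ^ 2 = Fintype.card Ω * (#S * p * (1 - p)) := by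
  have h1 : ∑ ω, (#{s ∈ S | ω ∈ A s} : ℝ) = #S * p * Fintype.card Ω := by
    rw [← Nat.cast_sum, sum_card_filter_mem, Nat.cast_sum, sum_congr rfl hA, sum_const,
      nsmul_eq_mul, mul_assoc]
  have h2 : ∑ ω, (#{s ∈ S | ω ∈ A s} : ℝ) ^ 2 =
      #S * (p * Fintype.card Ω + (#S - 1) * (p ^ 2 * Fintype.card Ω)) := by
    have hrow : ∀ s ∈ S, ∑ t ∈ S, (#(A s ∩ A t) : ℝ) =
        p * Fintype.card Ω + (#S - 1) * (p ^ 2 * Fintype.card Ω) := by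
      intro s hs
      rw [← add_sum_erase S _ hs, inter_self, hA s hs,
        sum_congr rfl fun t ht ↦ hAA s hs t (mem_erase.mp ht).2 (mem_erase.mp ht).1.symm,
        sum_const, nsmul_eq_mul, card_erase_of_mem hs, Nat.cast_sub (card_pos.mpr ⟨s, hs⟩),
        Nat.cast_one]
    simp_rw [← Nat.cast_pow, ← Nat.cast_sum, sum_card_filter_mem_sq]
    push_cast
    rw [sum_congr rfl hrow, sum_const, nsmul_eq_mul]
  simp_rw [sub_sq, sum_add_distrib, sum_sub_distrib, ← sum_mul, ← mul_sum, h1, h2, sum_const,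
    card_univ, nsmul_eq_mul]
  ring

theorem card_filter_card_filter_mem_le_half_div_le [DecidableEq ι] {p : ℝ}
    (hA : ∀ s ∈ S, (#(A s) : ℝ) = p * Fintype.card Ω)
    (hAA : ∀ s ∈ S, ∀ t ∈ S, s ≠ t → (#(A s ∩ A t) : ℝ) = p ^ 2 * Fintype.card Ω)
    (hμ : 0 < #S * p) :
    (#{ω | (#{s ∈ S | ω ∈ A s} : ℝ) ≤ #S * p / 2} : ℝ) / Fintype.card Ω ≤ 4 / (#S * p) := by
  have hp : 0 < p := pos_of_mul_pos_right hμ (Nat.cast_nonneg _)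
  have key := card_filter_le_sub_mul_sq_le (fun ω ↦ (#{s ∈ S | ω ∈ A s} : ℝ)) (#S * p)
    (half_pos hμ).le
  rw [sub_half, sum_sq_card_filter_mem_sub S A hA hAA] at key
  rcases (Nat.cast_nonneg (Fintype.card Ω) : (0 : ℝ) ≤ _).eq_or_lt with hΩ | hΩ
  · rw [← hΩ, div_zero]
    positivity
  rw [div_le_div_iff₀ hΩ hμ]
  refine le_of_mul_le_mul_right ?_ hμ
  nlinarith [mul_pos hΩ (mul_pos hμ hp)]

end Finset

section Binary

variable {K n : Type*}

theorem card_filter_binary_ne_zero [MulZeroOneClass K] [Nontrivial K] [DecidableEq K] [Fintype K]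
    [Fintype n] [DecidableEq n] :
    #{s : n → K | (∀ i, s i = 0 ∨ s i = 1) ∧ s ≠ 0} = 2 ^ Fintype.card n - 1 := by
  have hbin : ({s : n → K | ∀ i, s i = 0 ∨ s i = 1} : Finset _) =
      Fintype.piFinset fun _ ↦ {0, 1} := by
    ext s
    simp [Fintype.mem_piFinset]
  have hne : ({s : n → K | (∀ i, s i = 0 ∨ s i = 1) ∧ s ≠ 0} : Finset _) =
      ({s : n → K | ∀ i, s i = 0 ∨ s i = 1} : Finset _).erase 0 := by
    ext s
    simp [and_comm]
  rw [hne, card_erase_of_mem (by simp), hbin, Fintype.card_piFinset, prod_const, card_univ,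
    card_pair zero_ne_one]

theorem linearIndependent_pair_of_binary [Field K] {s t : n → K} (hs : ∀ i, s i = 0 ∨ s i = 1)
    (ht : ∀ i, t i = 0 ∨ t i = 1) (hs0 : s ≠ 0) (ht0 : t ≠ 0) (hst : s ≠ t) :
    LinearIndependent K ![s, t] := by
  refine (LinearIndependent.pair_iff' hs0).mpr fun a hat ↦ ?_
  obtain ⟨j, hj⟩ := Function.ne_iff.mp hst
  subst hat
  simp only [Pi.smul_apply, smul_eq_mul] at hj ht
  rcases hs j with h | h
  · simp [h] at hj
  · have htj := ht j
    rw [h, mul_one] at hj htj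
    have ha : a = 0 := htj.resolve_right hj.symm
    simp [ha] at ht0

end Binary

theorem stmt4_general (q ℓ n : ℕ) [Fact (Nat.Prime q)] (hn : 1 ≤ n)
    (u : Fin ℓ → ZMod q) :
    ((Finset.univ.filter (fun C : Matrix (Fin ℓ) (Fin n) (ZMod q) =>
          ((Finset.univ.filter (fun s : Fin n → ZMod q =>
              (∀ i, s i = 0 ∨ s i = 1) ∧ s ≠ 0 ∧ C.mulVec s = u)).card : ℝ)
            ≤ ((2 : ℝ) ^ n - 1) / (2 * (q : ℝ) ^ ℓ))).card : ℝ)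
      / (Fintype.card (Matrix (Fin ℓ) (Fin n) (ZMod q)) : ℝ)
      ≤ 4 * (q : ℝ) ^ ℓ / ((2 : ℝ) ^ n - 1) := by
  set S : Finset (Fin n → ZMod q) := {s | (∀ i, s i = 0 ∨ s i = 1) ∧ s ≠ 0}
  set A : (Fin n → ZMod q) → Finset (Matrix (Fin ℓ) (Fin n) (ZMod q)) :=
    fun s ↦ {C | C.mulVec s = u}
  set p : ℝ := ((q : ℝ) ^ ℓ)⁻¹
  have hS : (#S : ℝ) = 2 ^ n - 1 := by
    have h : #S = 2 ^ n - 1 := by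
      convert card_filter_binary_ne_zero (K := ZMod q) (n := Fin n)
      simp
    rw [h, Nat.cast_sub Nat.one_le_two_pow]
    push_cast
    ring
  have hcard : (Fintype.card (Fin ℓ → ZMod q) : ℝ)⁻¹ = p := by simp [p]
  have hA : ∀ s ∈ S, (#(A s) : ℝ) = p * Fintype.card (Matrix (Fin ℓ) (Fin n) (ZMod q)) :=
    fun s hs ↦ by rw [Matrix.card_filter_mulVec_eq (mem_filter.mp hs).2.2 u, hcard]
  have hAA : ∀ s ∈ S, ∀ t ∈ S, s ≠ t →
      (#(A s ∩ A t) : ℝ) = p ^ 2 * Fintype.card (Matrix (Fin ℓ) (Fin n) (ZMod q)) := by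
    intro s hs t ht hst
    simp only [S, mem_filter, mem_univ, true_and] at hs ht
    rw [← filter_and, Matrix.card_filter_mulVec_eq_and_mulVec_eq
      (linearIndependent_pair_of_binary hs.1 ht.1 hs.2 ht.2 hst) u u, hcard]
  have hμ : 0 < #S * p := by
    have : (1 : ℝ) < 2 ^ n := one_lt_pow₀ one_lt_two (by omega)
    have := (Fact.out : q.Prime).pos
    rw [hS]
    positivity
  have key := card_filter_card_filter_mem_le_half_div_le S A hA hAA hμ
  rw [hS, show (2 ^ n - 1) * p / 2 = (2 ^ n - 1) / (2 * (q : ℝ) ^ ℓ) by simp only [p]; field_simp,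
    show 4 / ((2 ^ n - 1) * p) = 4 * (q : ℝ) ^ ℓ / (2 ^ n - 1) by simp only [p]; field_simp] at key
  convert key using 6 with C
  congr 2
  ext s
  simp [S, A, and_assoc]

open Classical in
/-- For a uniformly random lossy kernel matrix `C` over `ℤ/q` and fixed `u`, the number `N`
of nonzero binary vectors `s` with `Cs = u` satisfies
`Pr[N ≤ (2^n − 1)/(2q^ℓ)] ≤ 4q^ℓ/(2^n − 1)`. -/
theorem stmt4 (q ℓ n : ℕ) [Fact (Nat.Prime q)] (hℓ : 1 ≤ ℓ) (hn : 1 ≤ n)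
    (u : Fin ℓ → ZMod q) :
    ((Finset.univ.filter (fun C : Matrix (Fin ℓ) (Fin n) (ZMod q) =>
          ((Finset.univ.filter (fun s : Fin n → ZMod q =>
              (∀ i, s i = 0 ∨ s i = 1) ∧ s ≠ 0 ∧ C.mulVec s = u)).card : ℝ)
            ≤ ((2 : ℝ) ^ n - 1) / (2 * (q : ℝ) ^ ℓ))).card : ℝ)
      / (Fintype.card (Matrix (Fin ℓ) (Fin n) (ZMod q)) : ℝ)
      ≤ 4 * (q : ℝ) ^ ℓ / ((2 : ℝ) ^ n - 1) :=
  stmt4_general q ℓ n hn u
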